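/- If Φ is a unital quantum channel (a completely positive trace-preserving map with Φ(I) = I), then the von Neumann entropy is non-decreasing under Φ: H(Φ(ρ)) ≥ H(ρ) for every density matrix ρ. -/

import Mathlib

open Matrix BigOperators Kronecker Complex
open scoped ComplexOrder

noncomputable section

/-- Apply a real function to a Hermitian matrix via the spectral theorem. -/
def matFun {n : Type*} [Fintype n] [DecidableEq n] (f : ℝ → ℝ) (A : Matrix n n ℂ) :
    Matrix n n ℂ :=
  if hA : A.IsHermitian then
    (hA.eigenvectorUnitary : Matrix n n ℂ) *
      Matrix.diagonal (fun i => (f (hA.eigenvalues i) : ℂ)) *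
      star (hA.eigenvectorUnitary : Matrix n n ℂ)
  else 0

/-- Matrix logarithm (spectral). -/
def matLog {n : Type*} [Fintype n] [DecidableEq n] (A : Matrix n n ℂ) : Matrix n n ℂ :=
  matFun Real.log A

/-- Von Neumann entropy `H(ρ) = -tr(ρ log ρ)`. -/
def vnEntropy {n : Type*} [Fintype n] [DecidableEq n] (ρ : Matrix n n ℂ) : ℝ :=
  -(ρ * matLog ρ).trace.re

/-- Quantum relative entropy `R(ρ‖σ) = tr(ρ log ρ) - tr(ρ log σ)`. -/
def relEnt {n : Type*} [Fintype n] [DecidableEq n] (ρ σ : Matrix n n ℂ) : ℝ :=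
  (ρ * matLog ρ).trace.re - (ρ * matLog σ).trace.re

/-- A density matrix: positive semidefinite with unit trace. -/
def IsDensity {n : Type*} [Fintype n] [DecidableEq n] (ρ : Matrix n n ℂ) : Prop :=
  ρ.PosSemidef ∧ ρ.trace = 1

/-- A quantum channel presented by a (finite) family of Kraus operators. -/
structure QChannel (n m : Type*) [Fintype n] [DecidableEq n] [Fintype m] [DecidableEq m] where
  k : ℕ
  K : Fin k → Matrix m n ℂ
  tp : ∑ i, (K i)ᴴ * K i = 1

/-- The action of the channel: `Φ(ρ) = ∑ i, K i ρ (K i)†`. -/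
def QChannel.app {n m : Type*} [Fintype n] [DecidableEq n] [Fintype m] [DecidableEq m]
    (Φ : QChannel n m) (ρ : Matrix n n ℂ) : Matrix m m ℂ :=
  ∑ i, Φ.K i * ρ * (Φ.K i)ᴴ

/-- Partial trace over the left (first) tensor factor. -/
def ptraceLeft {e n : Type*} [Fintype e] (M : Matrix (e × n) (e × n) ℂ) : Matrix n n ℂ :=
  Matrix.of fun i j => ∑ a, M (a, i) (a, j)

/-- Partial trace over the right (second) tensor factor. -/
def ptraceRight {n e : Type*} [Fintype e] (M : Matrix (n × e) (n × e) ℂ) : Matrix n n ℂ :=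
  Matrix.of fun i j => ∑ a, M (i, a) (j, a)

/-- The maximally entangled state `|ω⟩⟨ω|`, `|ω⟩ = (1/√d) ∑ i |ii⟩`. -/
def maxEnt (n : Type*) [Fintype n] [DecidableEq n] : Matrix (n × n) (n × n) ℂ :=
  Matrix.of fun p q =>
    if p.1 = p.2 ∧ q.1 = q.2 then (1 : ℂ) / (Fintype.card n : ℂ) else 0

/-- The channel tensored with the identity, `(Φ ⊗ id)(M)`. -/
def QChannel.tensorId {n m : Type*} [Fintype n] [DecidableEq n] [Fintype m] [DecidableEq m]
    (Φ : QChannel n m) {e : Type*} [Fintype e] [DecidableEq e]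
    (M : Matrix (n × e) (n × e) ℂ) : Matrix (m × e) (m × e) ℂ :=
  ∑ i, (Φ.K i ⊗ₖ (1 : Matrix e e ℂ)) * M * (Φ.K i ⊗ₖ (1 : Matrix e e ℂ))ᴴ

/-- The Choi state `ω_Φ = (Φ ⊗ id)(ω)`. -/
def QChannel.choi {n m : Type*} [Fintype n] [DecidableEq n] [Fintype m] [DecidableEq m]
    (Φ : QChannel n m) : Matrix (m × n) (m × n) ℂ :=
  Φ.tensorId (maxEnt n)

/-- `φ` is a purification of `ρ` (reduced state on the first factor is `ρ`). -/
def Purifies {n e : Type*} [Fintype e] (φ : n × e → ℂ) (ρ : Matrix n n ℂ) : Prop :=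
  ptraceRight (Matrix.vecMulVec φ (star φ)) = ρ

/-- Coherent information `I_c(ρ,Φ)` computed with the purification `φ` of `ρ`. -/
def cohInfo {n m : Type*} [Fintype n] [DecidableEq n] [Fintype m] [DecidableEq m]
    (Φ : QChannel n m) {r : Type*} [Fintype r] [DecidableEq r]
    (ρ : Matrix n n ℂ) (φ : n × r → ℂ) : ℝ :=
  vnEntropy (Φ.app ρ) - vnEntropy (Φ.tensorId (Matrix.vecMulVec φ (star φ)))

/-- Coherent information at the maximally mixed input, `I(Φ) = H(Φ(π)) − H(ω_Φ)`. -/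
def Ibar {n : Type*} [Fintype n] [DecidableEq n] (Φ : QChannel n n) : ℝ :=
  vnEntropy (Φ.app (((Fintype.card n : ℂ))⁻¹ • 1)) - vnEntropy Φ.choi

/-- Spectral square root of a Hermitian matrix. -/
def msqrt {n : Type*} [Fintype n] [DecidableEq n] (A : Matrix n n ℂ) : Matrix n n ℂ :=
  matFun Real.sqrt A

/-- Trace norm `‖A‖₁ = tr √(A†A)`. -/
def traceNorm {n m : Type*} [Fintype n] [DecidableEq n] [Fintype m] [DecidableEq m]
    (A : Matrix n m ℂ) : ℝ :=
  (msqrt (Aᴴ * A)).trace.re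

/-- Fidelity `F(ρ,σ) = ‖√ρ√σ‖₁²`. -/
def fidelity {n : Type*} [Fintype n] [DecidableEq n] (ρ σ : Matrix n n ℂ) : ℝ :=
  (traceNorm (msqrt ρ * msqrt σ)) ^ 2



section Aux

lemma vnEntropy_eq_sum {n : Type*} [Fintype n] [DecidableEq n] {A : Matrix n n ℂ}
    (hA : A.IsHermitian) :
    vnEntropy A = ∑ i, Real.negMulLog (hA.eigenvalues i) := by
  set U : Matrix n n ℂ := (hA.eigenvectorUnitary : Matrix n n ℂ) with hUdef
  have hUU : star U * U = 1 := Matrix.mem_unitaryGroup_iff'.mp hA.eigenvectorUnitary.2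
  have hdiag : star U * A * U = Matrix.diagonal (fun i => (hA.eigenvalues i : ℂ)) := by
    rw [hUdef]
    have h := hA.conjStarAlgAut_star_eigenvectorUnitary
    rw [Unitary.conjStarAlgAut_apply, Unitary.coe_star, star_star] at h; exact h
  have h1 : (A * matLog A).trace
      = (Matrix.diagonal (fun i => (hA.eigenvalues i : ℂ)) *
          Matrix.diagonal (fun i => ((Real.log (hA.eigenvalues i) : ℂ)))).trace := by
    unfold matLog matFun
    rw [dif_pos hA]
    rw [show A * ((hA.eigenvectorUnitary : Matrix n n ℂ) *
        Matrix.diagonal (fun i => ((Real.log (hA.eigenvalues i) : ℂ))) *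
        star (hA.eigenvectorUnitary : Matrix n n ℂ))
      = (A * U * Matrix.diagonal (fun i => ((Real.log (hA.eigenvalues i) : ℂ)))) * star U
      from by rw [hUdef]; noncomm_ring]
    rw [Matrix.trace_mul_comm, ← Matrix.mul_assoc, ← Matrix.mul_assoc, hdiag]
  rw [vnEntropy, h1, Matrix.diagonal_mul_diagonal, Matrix.trace_diagonal]
  rw [show ∀ z : ℂ, z.re = Complex.re z from fun _ => rfl]
  simp only [← Complex.ofReal_mul, Complex.re_sum, Complex.ofReal_re]
  rw [← Finset.sum_neg_distrib]
  exact Finset.sum_congr rfl fun i _ => by rw [Real.negMulLog]; ring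

lemma sum_negMulLog_le_of_doublyStochastic {n : Type*} [Fintype n]
    (lam mu : n → ℝ) (B : n → n → ℝ)
    (hB0 : ∀ j k, 0 ≤ B j k) (hrow : ∀ j, ∑ k, B j k = 1) (hcol : ∀ k, ∑ j, B j k = 1)
    (hlam : ∀ k, 0 ≤ lam k) (hmu : ∀ j, mu j = ∑ k, B j k * lam k) :
    ∑ k, Real.negMulLog (lam k) ≤ ∑ j, Real.negMulLog (mu j) := by
  have step : ∀ j, ∑ k, B j k * Real.negMulLog (lam k) ≤ Real.negMulLog (mu j) := by
    intro j
    have := Real.concaveOn_negMulLog.le_map_sum (t := Finset.univ) (w := B j) (p := lam)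
      (fun k _ => hB0 j k) (hrow j) (fun k _ => hlam k)
    simpa [smul_eq_mul, hmu j] using this
  calc ∑ k, Real.negMulLog (lam k)
      = ∑ j, ∑ k, B j k * Real.negMulLog (lam k) := by
        rw [Finset.sum_comm]
        refine Finset.sum_congr rfl fun k _ => ?_
        rw [← Finset.sum_mul, hcol k, one_mul]
    _ ≤ ∑ j, Real.negMulLog (mu j) := Finset.sum_le_sum fun j _ => step j

lemma mul_diag_conjT_apply {n : Type*} [Fintype n] [DecidableEq n]
    (M : Matrix n n ℂ) (d : n → ℝ) (j : n) :
    (M * Matrix.diagonal (fun k => (d k : ℂ)) * Mᴴ) j j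
      = ((∑ k, ‖M j k‖ ^ 2 * d k : ℝ) : ℂ) := by
  push_cast
  rw [Matrix.mul_apply]
  refine Finset.sum_congr rfl fun k _ => ?_
  rw [Matrix.mul_diagonal, Matrix.conjTranspose_apply]
  rw [show M j k * (d k : ℂ) * star (M j k) = (M j k * star (M j k)) * (d k : ℂ) by ring]
  simp only [Complex.star_def, Complex.mul_conj']

lemma mul_conjT_apply {n : Type*} [Fintype n] (M : Matrix n n ℂ) (j : n) :
    (M * Mᴴ) j j = ((∑ k, ‖M j k‖ ^ 2 : ℝ) : ℂ) := by
  push_cast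
  rw [Matrix.mul_apply]
  refine Finset.sum_congr rfl fun k _ => ?_
  rw [Matrix.conjTranspose_apply]
  simp only [Complex.star_def, Complex.mul_conj']

lemma conjT_mul_apply {n : Type*} [Fintype n] (M : Matrix n n ℂ) (k : n) :
    (Mᴴ * M) k k = ((∑ j, ‖M j k‖ ^ 2 : ℝ) : ℂ) := by
  push_cast
  rw [Matrix.mul_apply]
  refine Finset.sum_congr rfl fun j _ => ?_
  rw [Matrix.conjTranspose_apply]
  rw [show star (M j k) * M j k = M j k * star (M j k) by ring]
  simp only [Complex.star_def, Complex.mul_conj']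

end Aux

/-- von Neumann entropy is non-decreasing under unital channels. -/
theorem vnEntropy_le_apply_of_unital {n : Type*} [Fintype n] [DecidableEq n]
    (Φ : QChannel n n) (hU : Φ.app 1 = 1)
    (ρ : Matrix n n ℂ) (hρ : IsDensity ρ) :
    vnEntropy ρ ≤ vnEntropy (Φ.app ρ) := by
  obtain ⟨hPSD, htr⟩ := hρ
  have hρH : ρ.IsHermitian := hPSD.1
  have hσPSD : (Φ.app ρ).PosSemidef := by
    refine Finset.sum_induction _ _ (fun a b ha hb => ha.add hb) Matrix.PosSemidef.zero
      (fun i _ => hPSD.mul_mul_conjTranspose_same (Φ.K i))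
  have hσH : (Φ.app ρ).IsHermitian := hσPSD.1
  set U : Matrix n n ℂ := (hρH.eigenvectorUnitary : Matrix n n ℂ) with hUdef
  set V : Matrix n n ℂ := (hσH.eigenvectorUnitary : Matrix n n ℂ) with hVdef
  have hUU : star U * U = 1 := Matrix.mem_unitaryGroup_iff'.mp hρH.eigenvectorUnitary.2
  have hUU' : U * star U = 1 := Matrix.mem_unitaryGroup_iff.mp hρH.eigenvectorUnitary.2
  have hUUc : U * Uᴴ = 1 := by rw [← Matrix.star_eq_conjTranspose]; exact hUU'
  have hVV : star V * V = 1 := Matrix.mem_unitaryGroup_iff'.mp hσH.eigenvectorUnitary.2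
  have hVV' : V * star V = 1 := Matrix.mem_unitaryGroup_iff.mp hσH.eigenvectorUnitary.2
  have hVVc : V * Vᴴ = 1 := by rw [← Matrix.star_eq_conjTranspose]; exact hVV'
  set lam : n → ℝ := hρH.eigenvalues with hlamdef
  set mu : n → ℝ := hσH.eigenvalues with hmudef
  set M : Fin Φ.k → Matrix n n ℂ := fun i => star V * Φ.K i * U with hMdef
  set B : n → n → ℝ := fun j k => ∑ i, ‖M i j k‖ ^ 2 with hBdef
  have hρeq : ρ = U * Matrix.diagonal (fun k => (lam k : ℂ)) * star U := by
    rw [hUdef, hlamdef]; exact hρH.spectral_theorem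
  -- the key change-of-basis identity
  have hexp : star V * Φ.app ρ * V
      = ∑ i, M i * Matrix.diagonal (fun k => (lam k : ℂ)) * (M i)ᴴ := by
    unfold QChannel.app
    rw [Finset.mul_sum, Finset.sum_mul]
    refine Finset.sum_congr rfl fun i _ => ?_
    rw [hρeq, hMdef]
    simp only [Matrix.conjTranspose_mul, Matrix.star_eq_conjTranspose,
      Matrix.conjTranspose_conjTranspose, Matrix.mul_assoc]
  have hdiagσ : star V * Φ.app ρ * V = Matrix.diagonal (fun j => (mu j : ℂ)) := by
    rw [hVdef, hmudef]
    have h := hσH.conjStarAlgAut_star_eigenvectorUnitary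
    rw [Unitary.conjStarAlgAut_apply, Unitary.coe_star, star_star] at h; exact h
  -- (a) mu j = ∑ k, B j k * lam k
  have hmu : ∀ j, mu j = ∑ k, B j k * lam k := by
    intro j
    have h := congrFun (congrFun (hdiagσ.symm.trans hexp) j) j
    rw [Matrix.diagonal_apply_eq] at h
    rw [Matrix.sum_apply] at h
    simp only [mul_diag_conjT_apply] at h
    rw [← Complex.ofReal_sum] at h
    have h2 := Complex.ofReal_inj.mp h
    rw [h2, Finset.sum_comm]
    simp only [hBdef, Finset.sum_mul]
  -- (b) row sums
  have hrow : ∀ j, ∑ k, B j k = 1 := by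
    intro j
    have hsum : ∑ i, M i * (M i)ᴴ = 1 := by
      have : ∑ i, M i * (M i)ᴴ = star V * Φ.app 1 * V := by
        unfold QChannel.app
        rw [Finset.mul_sum, Finset.sum_mul]
        refine Finset.sum_congr rfl fun i _ => ?_
        rw [hMdef]
        simp only [Matrix.conjTranspose_mul, Matrix.star_eq_conjTranspose,
          Matrix.conjTranspose_conjTranspose, Matrix.mul_assoc, Matrix.mul_one]
        rw [← Matrix.mul_assoc U Uᴴ, hUUc, Matrix.one_mul]
      rw [this, hU, Matrix.mul_one, hVV]
    have h := congrFun (congrFun hsum j) j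
    rw [Matrix.sum_apply] at h
    simp only [mul_conjT_apply] at h
    rw [← Complex.ofReal_sum, Matrix.one_apply_eq] at h
    have h2 : (∑ i, ∑ k, ‖M i j k‖ ^ 2) = 1 := by
      exact_mod_cast h
    rw [← h2, Finset.sum_comm]
  -- (c) column sums
  have hcol : ∀ k, ∑ j, B j k = 1 := by
    intro k
    have hsum : ∑ i, (M i)ᴴ * M i = 1 := by
      have : ∑ i, (M i)ᴴ * M i = star U * (∑ i, (Φ.K i)ᴴ * Φ.K i) * U := by
        rw [Finset.mul_sum, Finset.sum_mul]
        refine Finset.sum_congr rfl fun i _ => ?_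
        rw [hMdef]
        simp only [Matrix.conjTranspose_mul, Matrix.star_eq_conjTranspose,
          Matrix.conjTranspose_conjTranspose, Matrix.mul_assoc]
        rw [← Matrix.mul_assoc V Vᴴ, hVVc, Matrix.one_mul]
      rw [this, Φ.tp, Matrix.mul_one, hUU]
    have h := congrFun (congrFun hsum k) k
    rw [Matrix.sum_apply] at h
    simp only [conjT_mul_apply] at h
    rw [← Complex.ofReal_sum, Matrix.one_apply_eq] at h
    have h2 : (∑ i, ∑ j, ‖M i j k‖ ^ 2) = 1 := by
      exact_mod_cast h
    rw [← h2, Finset.sum_comm]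
  rw [vnEntropy_eq_sum hρH, vnEntropy_eq_sum hσH]
  exact sum_negMulLog_le_of_doublyStochastic lam mu B
    (fun j k => Finset.sum_nonneg fun i _ => by positivity) hrow hcol
    (fun k => hPSD.eigenvalues_nonneg k) hmu


end
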